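/- Let 0 < p < 1/2 and Π_t be a binomial random variable with parameters t and p, where 1 ≤ n ≤ t. Then P[Π_t < n] ≤ (n / (n-1)!) · t^n · exp(-p t). -/

import Mathlib

/-!
Each of the `n` terms `C(t,i) p^i (1-p)^(t-i)` with `i < n` is at most `C(t,i) (1-p)^t`, because
`p < 1 - p`. Then `(1-p)^t ≤ exp(-p t)`, and `(n-1)! C(t,i) ≤ t^(n-1)` since `i ≤ n - 1 ≤ t`.
-/

open Finset Nat

theorem Nat.factorial_le_factorial_mul_pow_sub {i m : ℕ} (him : i ≤ m) :
    m ! ≤ i ! * m ^ (m - i) := by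
  have h := Nat.factorial_mul_descFactorial (Nat.sub_le m i)
  rw [Nat.sub_sub_self him] at h
  rw [← h]
  exact Nat.mul_le_mul_left _ (Nat.descFactorial_le_pow _ _)

theorem Nat.factorial_mul_choose_le_pow {i m t : ℕ} (him : i ≤ m) (hmt : m ≤ t) :
    m ! * t.choose i ≤ t ^ m :=
  calc m ! * t.choose i
      ≤ i ! * m ^ (m - i) * t.choose i :=
        Nat.mul_le_mul_right _ (factorial_le_factorial_mul_pow_sub him)
    _ = m ^ (m - i) * t.descFactorial i := by
        rw [Nat.descFactorial_eq_factorial_mul_choose]; ring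
    _ ≤ t ^ (m - i) * t ^ i :=
        Nat.mul_le_mul (Nat.pow_le_pow_left hmt _) (Nat.descFactorial_le_pow _ _)
    _ = t ^ m := by rw [← pow_add, Nat.sub_add_cancel him]

theorem Nat.cast_choose_le_pow_div_factorial {i m t : ℕ} (him : i ≤ m) (hmt : m ≤ t) :
    (t.choose i : ℝ) ≤ (t : ℝ) ^ m / m ! := by
  rw [le_div_iff₀ (by positivity), mul_comm]
  exact_mod_cast factorial_mul_choose_le_pow him hmt

theorem Real.one_sub_pow_le_exp_neg_mul {p : ℝ} (hp : p ≤ 1) (t : ℕ) :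
    (1 - p) ^ t ≤ Real.exp (-p * t) := by
  rw [mul_comm, Real.exp_nat_mul]
  exact pow_le_pow_left₀ (by linarith) (Real.one_sub_le_exp_neg p) t

theorem pow_mul_one_sub_pow_le_one_sub_pow {p : ℝ} (hp0 : 0 ≤ p) (hp : p ≤ 1 - p)
    {i t : ℕ} (hit : i ≤ t) :
    p ^ i * (1 - p) ^ (t - i) ≤ (1 - p) ^ t :=
  calc p ^ i * (1 - p) ^ (t - i)
      ≤ (1 - p) ^ i * (1 - p) ^ (t - i) := by
        have : 0 ≤ 1 - p := by linarith
        gcongr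
    _ = (1 - p) ^ t := by rw [← pow_add, Nat.add_sub_cancel' hit]

theorem binomial_term_le {p : ℝ} (hp0 : 0 ≤ p) (hp : p ≤ 1 - p) {i m t : ℕ} (him : i ≤ m)
    (hmt : m ≤ t) :
    (t.choose i : ℝ) * p ^ i * (1 - p) ^ (t - i) ≤ (t : ℝ) ^ m / m ! * Real.exp (-p * t) := by
  rw [mul_assoc]
  exact mul_le_mul (Nat.cast_choose_le_pow_div_factorial him hmt)
    ((pow_mul_one_sub_pow_le_one_sub_pow hp0 hp (him.trans hmt)).trans
      (Real.one_sub_pow_le_exp_neg_mul (by linarith) t))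
    (mul_nonneg (pow_nonneg hp0 _) (pow_nonneg (by linarith) _))
    (by positivity)

theorem stmt_10_general (p : ℝ) (hp0 : 0 < p) (hp : p < 1 / 2) (n t : ℕ)
    (hnt : n ≤ t) :
    ∑ i ∈ range n, (t.choose i : ℝ) * p ^ i * (1 - p) ^ (t - i) ≤
      ((n : ℝ) / (n - 1).factorial) * (t : ℝ) ^ n * Real.exp (-p * t) := by
  have hterm : ∀ i ∈ range n, (t.choose i : ℝ) * p ^ i * (1 - p) ^ (t - i) ≤
      (t : ℝ) ^ (n - 1) / (n - 1)! * Real.exp (-p * t) := fun i hi =>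
    binomial_term_le hp0.le (by linarith) (Nat.le_sub_one_of_lt (mem_range.mp hi)) (by omega)
  have hpow : (n : ℝ) * (t : ℝ) ^ (n - 1) ≤ n * (t : ℝ) ^ n := by
    rcases n with _ | k
    · simp
    · gcongr
      · exact_mod_cast (Nat.succ_pos k).trans_le hnt
      · omega
  calc ∑ i ∈ range n, (t.choose i : ℝ) * p ^ i * (1 - p) ^ (t - i)
      ≤ n * ((t : ℝ) ^ (n - 1) / (n - 1)! * Real.exp (-p * t)) := by
        simpa using sum_le_sum hterm
    _ = n * (t : ℝ) ^ (n - 1) / (n - 1)! * Real.exp (-p * t) := by ring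
    _ ≤ n * (t : ℝ) ^ n / (n - 1)! * Real.exp (-p * t) := by gcongr
    _ = _ := by ring

open Finset in
/-- The failure-probability bound of Theorem 1: if `Π_t ~ Binomial(t, p)` with
`0 < p < 1/2` and `1 ≤ n ≤ t`, then
`P[Π_t < n] = ∑_{i<n} C(t,i) p^i (1-p)^{t-i} ≤ (n/(n-1)!) t^n exp(-p t)`. -/
theorem stmt_10 (p : ℝ) (hp0 : 0 < p) (hp : p < 1 / 2) (n t : ℕ)
    (hn : 1 ≤ n) (hnt : n ≤ t) :
    ∑ i ∈ range n, (t.choose i : ℝ) * p ^ i * (1 - p) ^ (t - i) ≤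
      ((n : ℝ) / (n - 1).factorial) * (t : ℝ) ^ n * Real.exp (-p * t) :=
  stmt_10_general p hp0 hp n t hnt
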